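/- For n ≥ 1 and m ≥ 1 with (n,m) ≠ (1,1), the set of noncrossing partitions of [n] into m blocks with exactly one singleton block is in bijection with the set of pairs (π, i) where π is a noncrossing partition of [n−1] into m−1 blocks with no singleton block and 1 ≤ i ≤ n; hence NC_{n,m,1} = n · NC_{n−1,m−1,0}. -/

import Mathlib

/-- `π` is a partition of `[n] = {1,…,n}`: blocks are nonempty, pairwise disjoint,
and their union is exactly `{1,…,n}`. -/
def IsPartitionOf (n : ℕ) (π : Finset (Finset ℕ)) : Prop :=
  (∀ A ∈ π, A.Nonempty) ∧
  (∀ A ∈ π, ∀ B ∈ π, A ≠ B → Disjoint A B) ∧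
  (∀ x : ℕ, x ∈ Finset.Icc 1 n ↔ ∃ A ∈ π, x ∈ A)

/-- `π` is crossing: two distinct blocks contain `a < c < b < d` with `a,b` in one and
`c,d` in the other. -/
def Crossing (π : Finset (Finset ℕ)) : Prop :=
  ∃ A ∈ π, ∃ B ∈ π, A ≠ B ∧ ∃ a ∈ A, ∃ b ∈ A, ∃ c ∈ B, ∃ d ∈ B,
    a < c ∧ c < b ∧ b < d

/-- Noncrossing partition of `[n]`. -/
def IsNCPartition (n : ℕ) (π : Finset (Finset ℕ)) : Prop :=
  IsPartitionOf n π ∧ ¬ Crossing π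

/-- Replace the singleton blocks `{i}` and `{j}` by the block `{i,j}`. -/
def mergeSingles (π : Finset (Finset ℕ)) (i j : ℕ) : Finset (Finset ℕ) :=
  insert {i, j} ((π.erase {i}).erase {j})

/-- A marriageable singles partition of `[n]`. -/
def IsMarriageable (n : ℕ) (π : Finset (Finset ℕ)) : Prop :=
  IsNCPartition n π ∧ ∃ i j : ℕ, i ≠ j ∧ {i} ∈ π ∧ {j} ∈ π ∧
    IsNCPartition n (mergeSingles π i j)

/-- A lonely singles partition of `[n]`. -/
def IsLonely (n : ℕ) (π : Finset (Finset ℕ)) : Prop :=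
  IsNCPartition n π ∧ ¬ IsMarriageable n π

/-- `C n`: the number of noncrossing partitions of `[n]`. -/
noncomputable def Cnum (n : ℕ) : ℕ := Set.ncard {π : Finset (Finset ℕ) | IsNCPartition n π}

/-- `M n`: the number of marriageable singles partitions of `[n]`. -/
noncomputable def Mnum (n : ℕ) : ℕ := Set.ncard {π : Finset (Finset ℕ) | IsMarriageable n π}

/-- `L n`: the number of lonely singles partitions of `[n]`. -/
noncomputable def Lnum (n : ℕ) : ℕ := Set.ncard {π : Finset (Finset ℕ) | IsLonely n π}

/-- `NCcount n m k`: number of noncrossing partitions of `[n]` into `m` blocks with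
exactly `k` singleton blocks. -/
noncomputable def NCcount (n m k : ℕ) : ℕ :=
  Set.ncard {π : Finset (Finset ℕ) | IsNCPartition n π ∧ π.card = m ∧
    (π.filter fun A => A.card = 1).card = k}

/-- Binomial coefficient on integers, `0` when an argument is negative. -/
def zchoose (a b : ℤ) : ℤ := if 0 ≤ a ∧ 0 ≤ b then (a.toNat).choose b.toNat else 0

/-!
Removing the unique singleton block `{i}` and closing the gap at `i` (renumbering `x > i` as
`x - 1`) turns a noncrossing partition of `[n]` with `m` blocks and exactly one singleton into a
noncrossing partition of `[n - 1]` with `m - 1` blocks and no singleton; opening a gap at any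
`i ∈ [n]` and inserting `{i}` is inverse to it. Noncrossingness survives both ways because the
renumbering is monotone and a singleton block can never be part of a crossing.
-/

namespace NCPartition

open Finset

structure IsPartitionOn {α : Type*} (S : Finset α) (π : Finset (Finset α)) : Prop where
  nonempty : ∀ A ∈ π, A.Nonempty
  disjoint : ∀ A ∈ π, ∀ B ∈ π, A ≠ B → Disjoint A B
  mem_iff : ∀ x, x ∈ S ↔ ∃ A ∈ π, x ∈ A

theorem isPartitionOf_iff {n : ℕ} {π : Finset (Finset ℕ)} :
    IsPartitionOf n π ↔ IsPartitionOn (Icc 1 n) π :=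
  ⟨fun ⟨h₁, h₂, h₃⟩ => ⟨h₁, h₂, h₃⟩, fun ⟨h₁, h₂, h₃⟩ => ⟨h₁, h₂, h₃⟩⟩

namespace IsPartitionOn

variable {α β : Type*} {S : Finset α} {π : Finset (Finset α)}

theorem subset (h : IsPartitionOn S π) {A : Finset α} (hA : A ∈ π) : A ⊆ S :=
  fun x hx => (h.mem_iff x).2 ⟨A, hA, hx⟩

theorem image [DecidableEq α] [DecidableEq β] (h : IsPartitionOn S π) {f : α → β}
    (hf : Set.InjOn f S) :
    IsPartitionOn (S.image f) (π.image (Finset.image f)) where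
  nonempty := by
    simp only [mem_image, forall_exists_index, and_imp]
    rintro _ A hA rfl
    exact (h.nonempty A hA).image f
  disjoint := by
    simp only [mem_image, forall_exists_index, and_imp]
    rintro _ A hA rfl _ B hB rfl hAB
    have hinj : Set.InjOn f (↑A ∪ ↑B) :=
      hf.mono (Set.union_subset (coe_subset.2 (h.subset hA)) (coe_subset.2 (h.subset hB)))
    rw [disjoint_iff_inter_eq_empty, ← image_inter_of_injOn A B hinj,
      disjoint_iff_inter_eq_empty.1 (h.disjoint A hA B hB (by rintro rfl; exact hAB rfl)),
      image_empty]
  mem_iff x := by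
    simp only [mem_image, h.mem_iff]
    constructor
    · rintro ⟨a, ⟨A, hA, ha⟩, rfl⟩
      exact ⟨_, ⟨A, hA, rfl⟩, mem_image_of_mem f ha⟩
    · rintro ⟨_, ⟨A, hA, rfl⟩, hx⟩
      obtain ⟨a, ha, rfl⟩ := mem_image.1 hx
      exact ⟨a, ⟨A, hA, ha⟩, rfl⟩

theorem insert_singleton [DecidableEq α] (h : IsPartitionOn S π) {i : α} (hi : i ∉ S) :
    IsPartitionOn (insert i S) (insert {i} π) where
  nonempty A hA := by
    rcases mem_insert.1 hA with rfl | hA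
    exacts [singleton_nonempty i, h.nonempty A hA]
  disjoint A hA B hB hAB := by
    have hsingle : ∀ C ∈ π, Disjoint {i} C := fun C hC =>
      disjoint_singleton_left.2 fun hiC => hi (h.subset hC hiC)
    rcases mem_insert.1 hA with rfl | hA <;> rcases mem_insert.1 hB with rfl | hB
    exacts [absurd rfl hAB, hsingle B hB, (hsingle A hA).symm, h.disjoint A hA B hB hAB]
  mem_iff x := by simp [h.mem_iff]

theorem erase_singleton [DecidableEq α] (h : IsPartitionOn S π) {i : α} (hi : {i} ∈ π) :
    IsPartitionOn (S.erase i) (π.erase {i}) where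
  nonempty A hA := h.nonempty A (mem_of_mem_erase hA)
  disjoint A hA B hB := h.disjoint A (mem_of_mem_erase hA) B (mem_of_mem_erase hB)
  mem_iff x := by
    rw [mem_erase, h.mem_iff]
    constructor
    · rintro ⟨hxi, A, hA, hxA⟩
      exact ⟨A, mem_erase.2 ⟨by rintro rfl; exact hxi (mem_singleton.1 hxA), hA⟩, hxA⟩
    · rintro ⟨A, hA, hxA⟩
      obtain ⟨hAi, hAπ⟩ := mem_erase.1 hA
      refine ⟨?_, A, hAπ, hxA⟩
      rintro rfl
      exact disjoint_left.1 (h.disjoint A hAπ _ hi hAi) hxA (mem_singleton_self x)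

end IsPartitionOn

theorem _root_.Crossing.mono {π π' : Finset (Finset ℕ)} (h : π ⊆ π') (hc : Crossing π) :
    Crossing π' := by
  obtain ⟨A, hA, B, hB, hAB, rest⟩ := hc
  exact ⟨A, h hA, B, h hB, hAB, rest⟩

theorem _root_.Crossing.of_image {π : Finset (Finset ℕ)} {f : ℕ → ℕ} {s : Set ℕ}
    (hf : StrictMonoOn f s) (hs : ∀ A ∈ π, ↑A ⊆ s) (hc : Crossing (π.image (image f))) :
    Crossing π := by
  obtain ⟨_, hA', _, hB', hAB, _, ha', _, hb', _, hc', _, hd', hac, hcb, hbd⟩ := hc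
  obtain ⟨A, hA, rfl⟩ := mem_image.1 hA'
  obtain ⟨B, hB, rfl⟩ := mem_image.1 hB'
  obtain ⟨a, ha, rfl⟩ := mem_image.1 ha'
  obtain ⟨b, hb, rfl⟩ := mem_image.1 hb'
  obtain ⟨c, hc, rfl⟩ := mem_image.1 hc'
  obtain ⟨d, hd, rfl⟩ := mem_image.1 hd'
  have lt_iff {x y : ℕ} (hx : x ∈ s) (hy : y ∈ s) : f x < f y ↔ x < y := hf.lt_iff_lt hx hy
  exact ⟨A, hA, B, hB, fun h => hAB (h ▸ rfl), a, ha, b, hb, c, hc, d, hd,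
    (lt_iff (hs A hA ha) (hs B hB hc)).1 hac, (lt_iff (hs B hB hc) (hs A hA hb)).1 hcb,
    (lt_iff (hs A hA hb) (hs B hB hd)).1 hbd⟩

theorem crossing_insert_singleton {π : Finset (Finset ℕ)} {i : ℕ} :
    Crossing (insert {i} π) ↔ Crossing π := by
  refine ⟨?_, Crossing.mono (subset_insert _ _)⟩
  rintro ⟨A, hA, B, hB, hAB, a, ha, b, hb, c, hc, d, hd, hac, hcb, hbd⟩
  have hA' : A ∈ π := (mem_insert.1 hA).resolve_left fun hAi => by
    subst hAi; rw [mem_singleton] at ha hb; omega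
  have hB' : B ∈ π := (mem_insert.1 hB).resolve_left fun hBi => by
    subst hBi; rw [mem_singleton] at hc hd; omega
  exact ⟨A, hA', B, hB', hAB, a, ha, b, hb, c, hc, d, hd, hac, hcb, hbd⟩

def succAbove (i x : ℕ) : ℕ := if i ≤ x then x + 1 else x

def predAbove (i x : ℕ) : ℕ := if i < x then x - 1 else x

theorem succAbove_ne (i x : ℕ) : succAbove i x ≠ i := by
  unfold succAbove; split <;> omega

theorem predAbove_succAbove (i x : ℕ) : predAbove i (succAbove i x) = x := by
  unfold succAbove predAbove; split <;> split <;> omega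

theorem succAbove_predAbove {i x : ℕ} (h : x ≠ i) : succAbove i (predAbove i x) = x := by
  unfold succAbove predAbove; split <;> split <;> omega

theorem strictMono_succAbove (i : ℕ) : StrictMono (succAbove i) := by
  intro x y h; unfold succAbove; split <;> split <;> omega

theorem strictMonoOn_predAbove (i : ℕ) : StrictMonoOn (predAbove i) {x | x ≠ i} := by
  intro x (hx : x ≠ i) y (hy : y ≠ i) h; unfold predAbove
  split <;> split <;> omega

theorem image_succAbove_Icc {n i : ℕ} (hi : i ∈ Icc 1 n) :
    (Icc 1 (n - 1)).image (succAbove i) = (Icc 1 n).erase i := by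
  ext x
  simp only [mem_image, mem_Icc, mem_erase] at hi ⊢
  constructor
  · rintro ⟨y, hy, rfl⟩
    exact ⟨succAbove_ne i y, by unfold succAbove; split <;> omega⟩
  · rintro ⟨hxi, hx⟩
    exact ⟨predAbove i x, by unfold predAbove; split <;> omega, succAbove_predAbove hxi⟩

theorem image_predAbove_erase_Icc {n i : ℕ} (hi : i ∈ Icc 1 n) :
    ((Icc 1 n).erase i).image (predAbove i) = Icc 1 (n - 1) := by
  rw [← image_succAbove_Icc hi, image_image]
  exact (image_congr fun x _ => predAbove_succAbove i x).trans image_id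

def insertSingleton (i : ℕ) (π : Finset (Finset ℕ)) : Finset (Finset ℕ) :=
  insert {i} (π.image (image (succAbove i)))

def removeSingleton (i : ℕ) (σ : Finset (Finset ℕ)) : Finset (Finset ℕ) :=
  (σ.erase {i}).image (image (predAbove i))

variable {n i : ℕ} {π σ : Finset (Finset ℕ)}

theorem singleton_notMem_image_image_succAbove (hπ : ∀ A ∈ π, A.Nonempty) :
    {i} ∉ π.image (image (succAbove i)) := by
  intro h
  obtain ⟨A, hA, hAi⟩ := mem_image.1 h
  obtain ⟨a, ha⟩ := hπ A hA
  exact succAbove_ne i a (mem_singleton.1 (hAi ▸ mem_image_of_mem _ ha))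

theorem removeSingleton_insertSingleton (hπ : ∀ A ∈ π, A.Nonempty) :
    removeSingleton i (insertSingleton i π) = π := by
  rw [removeSingleton, insertSingleton, erase_insert (singleton_notMem_image_image_succAbove hπ),
    image_image]
  refine (image_congr fun A _ => ?_).trans image_id
  rw [Function.comp_apply, image_image]
  exact (image_congr fun x _ => predAbove_succAbove i x).trans image_id

theorem insertSingleton_removeSingleton {S : Finset ℕ} (hσ : IsPartitionOn S σ)
    (hi : {i} ∈ σ) : insertSingleton i (removeSingleton i σ) = σ := by
  rw [removeSingleton, insertSingleton, image_image]
  have hσi := hσ.erase_singleton hi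
  refine (congrArg _ ((image_congr fun A hA => ?_).trans image_id)).trans (insert_erase hi)
  rw [Function.comp_apply, image_image]
  refine (image_congr fun x hx => succAbove_predAbove ?_).trans image_id
  exact (mem_erase.1 (hσi.subset hA hx)).1

theorem filter_insertSingleton :
    (insertSingleton i π).filter (fun A => A.card = 1) =
      insert {i} ((π.filter fun A => A.card = 1).image (image (succAbove i))) := by
  simp [insertSingleton, filter_insert, filter_image,
    card_image_of_injective _ (strictMono_succAbove i).injective]

theorem card_insertSingleton (hπ : ∀ A ∈ π, A.Nonempty) :
    (insertSingleton i π).card = π.card + 1 := by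
  rw [insertSingleton, card_insert_of_notMem (singleton_notMem_image_image_succAbove hπ),
    card_image_of_injective _ (image_injective (strictMono_succAbove i).injective)]

theorem card_filter_insertSingleton (hπ : ∀ A ∈ π, A.Nonempty) :
    ((insertSingleton i π).filter fun A => A.card = 1).card =
      (π.filter fun A => A.card = 1).card + 1 := by
  rw [filter_insertSingleton, card_insert_of_notMem, card_image_of_injective _
    (image_injective (strictMono_succAbove i).injective)]
  exact fun h =>
    singleton_notMem_image_image_succAbove hπ (image_subset_image (filter_subset _ _) h)

theorem _root_.IsNCPartition.insertSingleton (hπ : IsNCPartition (n - 1) π)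
    (hi : i ∈ Icc 1 n) :
    IsNCPartition n (insertSingleton i π) := by
  obtain ⟨hpart, hnc⟩ := hπ
  refine ⟨isPartitionOf_iff.2 ?_, ?_⟩
  · have := ((isPartitionOf_iff.1 hpart).image
      (strictMono_succAbove i).injective.injOn).insert_singleton (i := i)
      (by simp [image_succAbove_Icc hi])
    rwa [image_succAbove_Icc hi, insert_erase hi] at this
  · rw [NCPartition.insertSingleton, crossing_insert_singleton]
    exact fun hc => hnc (hc.of_image ((strictMono_succAbove i).strictMonoOn Set.univ)
      fun _ _ => Set.subset_univ _)

theorem _root_.IsNCPartition.removeSingleton (hσ : IsNCPartition n σ) (hi : {i} ∈ σ) :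
    IsNCPartition (n - 1) (removeSingleton i σ) := by
  obtain ⟨hpart, hnc⟩ := hσ
  have hpart' := (isPartitionOf_iff.1 hpart).erase_singleton hi
  have hiS : i ∈ Icc 1 n := (isPartitionOf_iff.1 hpart).subset hi (mem_singleton_self i)
  have hblocks : ∀ A ∈ σ.erase {i}, ↑A ⊆ {x | x ≠ i} := fun A hA x hx =>
    (mem_erase.1 (hpart'.subset hA hx)).1
  refine ⟨isPartitionOf_iff.2 ?_, fun hc => hnc ?_⟩
  · rw [← image_predAbove_erase_Icc hiS]
    exact hpart'.image ((strictMonoOn_predAbove i).injOn.mono fun x hx => (mem_erase.1 hx).1)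
  · exact (hc.of_image (strictMonoOn_predAbove i) hblocks).mono (erase_subset _ _)

def NCSet (n m k : ℕ) : Set (Finset (Finset ℕ)) :=
  {π | IsNCPartition n π ∧ π.card = m ∧ (π.filter fun A => A.card = 1).card = k}

theorem ncard_NCSet (n m k : ℕ) : (NCSet n m k).ncard = NCcount n m k := rfl

theorem exists_singleton_mem_of_card_filter_eq_one {σ : Finset (Finset ℕ)}
    (h : (σ.filter fun A => A.card = 1).card = 1) : ∃ i, {i} ∈ σ := by
  obtain ⟨B, hB⟩ := card_eq_one.1 h
  obtain ⟨hBσ, hBc⟩ := mem_filter.1 (hB ▸ mem_singleton_self B : B ∈ σ.filter _)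
  obtain ⟨i, rfl⟩ := card_eq_one.1 hBc
  exact ⟨i, hBσ⟩

theorem bijOn_insertSingleton (n : ℕ) {m : ℕ} (hm : 1 ≤ m) :
    Set.BijOn (fun p : Finset (Finset ℕ) × ℕ => insertSingleton p.2 p.1)
      (NCSet (n - 1) (m - 1) 0 ×ˢ ↑(Icc 1 n)) (NCSet n m 1) := by
  refine ⟨?mapsTo, ?injOn, ?surjOn⟩
  case mapsTo =>
    rintro ⟨π, i⟩ ⟨⟨hπ, hcard, hsingle⟩, hi⟩
    have hne := (isPartitionOf_iff.1 hπ.1).nonempty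
    exact ⟨hπ.insertSingleton hi, by rw [card_insertSingleton hne, hcard]; omega,
      by rw [card_filter_insertSingleton hne, hsingle]⟩
  case injOn =>
    rintro ⟨π, i⟩ ⟨⟨hπ, -, hsingle⟩, -⟩ ⟨π', j⟩ ⟨⟨hπ', -, hsingle'⟩, -⟩ heq
    dsimp only at hπ hsingle hπ' hsingle' heq
    have hij : i = j := by
      have := congrArg (fun σ => σ.filter fun A => A.card = 1) heq
      simp only [filter_insertSingleton, card_eq_zero.1 hsingle, card_eq_zero.1 hsingle',
        image_empty, insert_empty_eq] at this
      exact singleton_injective (singleton_injective this)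
    subst hij
    congr 1
    rw [← removeSingleton_insertSingleton (isPartitionOf_iff.1 hπ.1).nonempty (i := i),
      heq, removeSingleton_insertSingleton (isPartitionOf_iff.1 hπ'.1).nonempty]
  case surjOn =>
    rintro σ ⟨hσ, hcard, hsingle⟩
    obtain ⟨i, hi⟩ := exists_singleton_mem_of_card_filter_eq_one hsingle
    have hpart := isPartitionOf_iff.1 hσ.1
    have hround := insertSingleton_removeSingleton hpart hi
    have hne := (isPartitionOf_iff.1 (hσ.removeSingleton hi).1).nonempty
    refine ⟨(removeSingleton i σ, i), ⟨⟨hσ.removeSingleton hi, ?_, ?_⟩,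
      hpart.subset hi (mem_singleton_self i)⟩, hround⟩
    · have := card_insertSingleton hne (i := i)
      rw [hround] at this
      dsimp only
      omega
    · have := card_filter_insertSingleton hne (i := i)
      rw [hround] at this
      dsimp only
      omega

end NCPartition

theorem stmt13_general (n m : ℕ) (hm : 1 ≤ m) :
    Nonempty
      ({π : Finset (Finset ℕ) // IsNCPartition n π ∧ π.card = m ∧
          (π.filter fun A => A.card = 1).card = 1} ≃
        {π : Finset (Finset ℕ) // IsNCPartition (n - 1) π ∧ π.card = m - 1 ∧
          (π.filter fun A => A.card = 1).card = 0} × (Finset.Icc 1 n : Finset ℕ)) ∧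
    NCcount n m 1 = n * NCcount (n - 1) (m - 1) 0 := by
  have hbij := NCPartition.bijOn_insertSingleton n hm
  refine ⟨⟨((Equiv.Set.prod _ _).symm.trans (hbij.equiv _)).symm⟩, ?_⟩
  rw [← NCPartition.ncard_NCSet, ← NCPartition.ncard_NCSet, ← hbij.ncard_eq, Set.ncard_prod,
    Set.ncard_coe_finset, Nat.card_Icc, Nat.add_sub_cancel, Nat.mul_comm]

theorem stmt13 (n m : ℕ) (hn : 1 ≤ n) (hm : 1 ≤ m) (h : (n, m) ≠ (1, 1)) :
    Nonempty
      ({π : Finset (Finset ℕ) // IsNCPartition n π ∧ π.card = m ∧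
          (π.filter fun A => A.card = 1).card = 1} ≃
        {π : Finset (Finset ℕ) // IsNCPartition (n - 1) π ∧ π.card = m - 1 ∧
          (π.filter fun A => A.card = 1).card = 0} × (Finset.Icc 1 n : Finset ℕ)) ∧
    NCcount n m 1 = n * NCcount (n - 1) (m - 1) 0 :=
  stmt13_general n m hm
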